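/- For ε > 0 define M_ε f(x) = sup |f| * (χ_E)_a (x), where the supremum is over all measurable subsets E of the ball B = {|x| ≤ 33/16} with |E| ≤ ε and all a > 0, and (χ_E)_a(x) = a^{-n} χ_E(x/a). Then there exists a constant C depending only on n such that ‖M_ε f‖_{L²(ℝⁿ)} ≤ C ε^{1/2} ‖f‖_{L²(ℝⁿ)} for all f ∈ L²(ℝⁿ). -/

import Mathlib

/-!
Splitting `|f| ≤ s + |f| 1_{|f| > s}`, and using that `a • E` has measure `aⁿ |E| ≤ aⁿ ε` and lies
in the ball of radius `33a/16`, gives `M_ε f ≤ ε s + |B_{33/16}| · M (|f| 1_{|f| > s})` with `M`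
the centered Hardy–Littlewood maximal function. Taking `s = t / (2ε)` and the weak `(1, 1)` bound
for `M` (Vitali covering) gives `|{M_ε f > t}| ≲ t⁻¹ ∫_{2ε|f| > t} |f|`; integrating against
`2t dt` (layer cake and Tonelli) yields `‖M_ε f‖₂² ≲ ε ‖f‖₂²`.
-/

open MeasureTheory Set ENNReal

/-- The maximal operator `M_ε f(x) = sup_{E ⊆ B_{33/16}, |E| ≤ ε, a > 0} |f| * (χ_E)_a (x)`,
where `(χ_E)_a(y) = a^{-n} χ_E(y/a)`, formulated with values in `ℝ≥0∞`. -/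
noncomputable def Meps {n : ℕ} (ε : ℝ) (f : EuclideanSpace ℝ (Fin n) → ℝ)
    (x : EuclideanSpace ℝ (Fin n)) : ℝ≥0∞ :=
  ⨆ (E : Set (EuclideanSpace ℝ (Fin n))) (_ : MeasurableSet E)
    (_ : E ⊆ Metric.closedBall (0 : EuclideanSpace ℝ (Fin n)) (33 / 16))
    (_ : volume E ≤ ENNReal.ofReal ε) (a : {a : ℝ // 0 < a}),
      ENNReal.ofReal ((a.1 ^ n)⁻¹) *
        ∫⁻ y in {y : EuclideanSpace ℝ (Fin n) | a.1⁻¹ • y ∈ E},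
          ENNReal.ofReal |f (x - y)|

open Metric Module

noncomputable def maximalFunction {X : Type*} [PseudoMetricSpace X] [MeasurableSpace X]
    (μ : Measure X) (g : X → ℝ≥0∞) (x : X) : ℝ≥0∞ :=
  ⨆ (r : ℝ) (_ : 0 < r), (μ (closedBall x r))⁻¹ * ∫⁻ y in closedBall x r, g y ∂μ

section AddHaar

variable {E : Type*} [NormedAddCommGroup E] [NormedSpace ℝ E] [FiniteDimensional ℝ E]
  [MeasurableSpace E] [BorelSpace E] (μ : Measure E) [μ.IsAddHaarMeasure]

theorem measure_le_of_forall_closedBall_le {S : Set E} {r : E → ℝ} {R : ℝ} {C : ℝ≥0∞}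
    {g : E → ℝ≥0∞}
    (hr : ∀ x ∈ S, 0 < r x ∧ r x ≤ R ∧
      μ (closedBall x (r x)) ≤ C * ∫⁻ y in closedBall x (r x), g y ∂μ) :
    μ S ≤ 4 ^ finrank ℝ E * C * ∫⁻ y, g y ∂μ := by
  obtain ⟨u, huS, hdisj, hcov⟩ := Vitali.exists_disjoint_subfamily_covering_enlargement_closedBall
    S id r R (fun x hx => (hr x hx).2.1) 4 (by norm_num)
  simp only [id] at hdisj hcov
  have hu : u.Countable := hdisj.countable_of_nonempty_interior fun x hx =>
    ⟨x, ball_subset_interior_closedBall (mem_ball_self (hr x (huS hx)).1)⟩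
  have := hu.to_subtype
  have hS : S ⊆ ⋃ x ∈ u, closedBall x (4 * r x) := fun y hy => by
    obtain ⟨x, hx, hyx⟩ := hcov y hy
    exact mem_biUnion hx (hyx (mem_closedBall_self (hr y hy).1.le))
  have hdoubling : ∀ x ∈ u,
      μ (closedBall x (4 * r x)) = 4 ^ finrank ℝ E * μ (closedBall x (r x)) := fun x hx => by
    have hx := (hr x (huS hx)).1.le
    rw [Measure.addHaar_closedBall μ x (by positivity), Measure.addHaar_closedBall μ x hx,
      mul_pow, ENNReal.ofReal_mul (by positivity), ENNReal.ofReal_pow (by norm_num), mul_assoc]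
    norm_num
  calc μ S ≤ ∑' x : u, μ (closedBall x (4 * r x)) :=
        (measure_mono hS).trans (measure_biUnion_le μ hu _)
    _ ≤ ∑' x : u, 4 ^ finrank ℝ E * C * ∫⁻ y in closedBall x (r x), g y ∂μ :=
        ENNReal.tsum_le_tsum fun x => by
          rw [hdoubling x x.2, mul_assoc]
          exact mul_le_mul_right (hr x (huS x.2)).2.2 _
    _ = 4 ^ finrank ℝ E * C * ∫⁻ y in ⋃ x : u, closedBall x (r x), g y ∂μ := by
        rw [ENNReal.tsum_mul_left, lintegral_iUnion (fun _ => measurableSet_closedBall)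
          (hdisj.subtype _ _)]
    _ ≤ 4 ^ finrank ℝ E * C * ∫⁻ y, g y ∂μ := mul_le_mul_right (setLIntegral_le_lintegral _ _) _

theorem measure_lt_maximalFunction_le (g : E → ℝ≥0∞) {t : ℝ≥0∞} (ht : t ≠ 0) :
    μ {x | t < maximalFunction μ g x} ≤ 4 ^ finrank ℝ E * t⁻¹ * ∫⁻ y, g y ∂μ := by
  -- Vitali's lemma needs bounded radii, so we exhaust by the radius bound `N`.
  set S : ℕ → Set E := fun N => {x | ∃ r : ℝ, 0 < r ∧ r ≤ N ∧
    μ (closedBall x r) ≤ t⁻¹ * ∫⁻ y in closedBall x r, g y ∂μ}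
  have hS : Monotone S := fun N N' hN x ⟨r, hr, hrN, hle⟩ =>
    ⟨r, hr, hrN.trans (by exact_mod_cast hN), hle⟩
  have hsub : {x | t < maximalFunction μ g x} ⊆ ⋃ N, S N := by
    intro x hx
    simp only [mem_ofPred_eq, maximalFunction, lt_iSup_iff] at hx
    obtain ⟨r, hr, hx⟩ := hx
    have htop : t ≠ ∞ := ne_top_of_lt hx
    obtain ⟨N, hN⟩ := exists_nat_ge r
    have hB0 := (measure_closedBall_pos μ x hr).ne'
    have hBtop := (measure_closedBall_lt_top (μ := μ) (x := x) (r := r)).ne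
    rw [← ENNReal.div_eq_inv_mul, ENNReal.lt_div_iff_mul_lt (.inl hB0) (.inl hBtop)] at hx
    refine mem_iUnion.2 ⟨N, r, hr, hN, ?_⟩
    exact (ENNReal.mul_le_iff_le_inv ht htop).1 hx.le
  calc μ {x | t < maximalFunction μ g x} ≤ μ (⋃ N, S N) := measure_mono hsub
    _ = ⨆ N, μ (S N) := hS.measure_iUnion
    _ ≤ 4 ^ finrank ℝ E * t⁻¹ * ∫⁻ y, g y ∂μ := iSup_le fun N => by
        choose! r hr using fun x (hx : x ∈ S N) => hx
        exact measure_le_of_forall_closedBall_le μ hr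

theorem setLIntegral_closedBall_zero_sub (g : E → ℝ≥0∞) (x : E) (R : ℝ) :
    ∫⁻ y in closedBall 0 R, g (x - y) ∂μ = ∫⁻ y in closedBall x R, g y ∂μ := by
  have h := (Measure.measurePreserving_sub_left μ x).setLIntegral_comp_preimage_emb
    (Homeomorph.subLeft x).measurableEmbedding g (closedBall x R)
  have hpre : (fun y => x - y) ⁻¹' closedBall x R = closedBall 0 R := by
    ext y
    simp [dist_eq_norm]
  rwa [hpre] at h

theorem setLIntegral_sub_le_measure_mul_maximalFunction {A : Set E} {R : ℝ} (hR : 0 < R)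
    (hA : A ⊆ closedBall 0 R) (g : E → ℝ≥0∞) (x : E) :
    ∫⁻ y in A, g (x - y) ∂μ ≤ μ (closedBall x R) * maximalFunction μ g x := by
  have hB0 := (measure_closedBall_pos μ x hR).ne'
  have hBtop := (measure_closedBall_lt_top (μ := μ) (x := x) (r := R)).ne
  calc ∫⁻ y in A, g (x - y) ∂μ ≤ ∫⁻ y in closedBall 0 R, g (x - y) ∂μ := lintegral_mono_set hA
    _ = μ (closedBall x R) * ((μ (closedBall x R))⁻¹ * ∫⁻ y in closedBall x R, g y ∂μ) := by
        rw [setLIntegral_closedBall_zero_sub, ← mul_assoc, ENNReal.mul_inv_cancel hB0 hBtop,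
          one_mul]
    _ ≤ μ (closedBall x R) * maximalFunction μ g x := by
        gcongr
        exact le_iSup₂ (f := fun r (_ : 0 < r) =>
          (μ (closedBall x r))⁻¹ * ∫⁻ y in closedBall x r, g y ∂μ) R hR

end AddHaar

section LayerCake

theorem volume_setOf_ofReal_lt_inter_Ioi (b : ℝ≥0∞) :
    volume ({t : ℝ | ENNReal.ofReal t < b} ∩ Ioi 0) = b := by
  rcases eq_or_ne b ∞ with rfl | hb
  · simp [Real.volume_Ioi]
  have hset : {t : ℝ | ENNReal.ofReal t < b} ∩ Ioi 0 = Ioo 0 b.toReal := by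
    ext t
    simp only [mem_inter_iff, mem_ofPred_eq, mem_Ioi, mem_Ioo]
    constructor
    · rintro ⟨htb, ht⟩
      exact ⟨ht, (ENNReal.ofReal_lt_iff_lt_toReal ht.le hb).1 htb⟩
    · rintro ⟨ht, htb⟩
      exact ⟨(ENNReal.ofReal_lt_iff_lt_toReal ht.le hb).2 htb, ht⟩
  rw [hset, Real.volume_Ioo, sub_zero, ENNReal.ofReal_toReal hb]

theorem lintegral_Ioo_two_mul_ofReal {r : ℝ} (hr : 0 ≤ r) :
    ∫⁻ t in Ioo 0 r, 2 * ENNReal.ofReal t = ENNReal.ofReal (r ^ 2) := by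
  have hint : IntegrableOn (fun t : ℝ => 2 * t) (Ioo 0 r) :=
    (by fun_prop : Continuous fun t : ℝ => 2 * t).integrableOn_Icc.mono_set Ioo_subset_Icc_self
  have hnonneg : 0 ≤ᵐ[volume.restrict (Ioo 0 r)] fun t : ℝ => 2 * t := by
    filter_upwards [ae_restrict_mem measurableSet_Ioo] with t ht
    simp only [Pi.zero_apply]
    linarith [ht.1]
  calc ∫⁻ t in Ioo 0 r, 2 * ENNReal.ofReal t = ∫⁻ t in Ioo 0 r, ENNReal.ofReal (2 * t) := by
        simp [ENNReal.ofReal_mul]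
    _ = ENNReal.ofReal (r ^ 2) := by
        rw [← ofReal_integral_eq_lintegral_ofReal hint hnonneg, ← integral_Ioc_eq_integral_Ioo,
          ← intervalIntegral.integral_of_le hr, intervalIntegral.integral_const_mul, integral_id]
        ring_nf

theorem le_lintegral_Ioi_indicator_sq_lt (c : ℝ≥0∞) :
    c ≤ ∫⁻ t in Ioi (0 : ℝ),
      {t : ℝ | ENNReal.ofReal t ^ 2 < c}.indicator (fun t => 2 * ENNReal.ofReal t) t := by
  refine le_of_forall_lt_imp_le_of_dense fun b hb => ?_
  set r := √b.toReal
  have hbr : b = ENNReal.ofReal (r ^ 2) := by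
    rw [Real.sq_sqrt toReal_nonneg, ofReal_toReal hb.ne_top]
  calc b = ∫⁻ t in Ioo 0 r, 2 * ENNReal.ofReal t := by
        rw [lintegral_Ioo_two_mul_ofReal (Real.sqrt_nonneg _)]
        exact hbr
    _ = ∫⁻ t in Ioo 0 r,
          {t : ℝ | ENNReal.ofReal t ^ 2 < c}.indicator (fun t => 2 * ENNReal.ofReal t) t := by
        refine setLIntegral_congr_fun measurableSet_Ioo fun t ht => ?_
        rw [indicator_of_mem]
        calc ENNReal.ofReal t ^ 2 = ENNReal.ofReal (t ^ 2) := (ENNReal.ofReal_pow ht.1.le 2).symm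
          _ ≤ b := hbr ▸ ENNReal.ofReal_le_ofReal (pow_le_pow_left₀ ht.1.le ht.2.le 2)
          _ < c := hb
    _ ≤ _ := lintegral_mono_set Ioo_subset_Ioi_self

variable {α : Type*} [MeasurableSpace α] (μ : Measure α) [SFinite μ]

theorem lintegral_sq_le_lintegral_measure_lt (F : α → ℝ≥0∞) :
    ∫⁻ x, F x ^ 2 ∂μ
      ≤ ∫⁻ t in Ioi (0 : ℝ), 2 * ENNReal.ofReal t * μ {x | ENNReal.ofReal t < F x} := by
  -- `F` need not be measurable: pass to a measurable minorant of `F ^ 2` with the same integral.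
  obtain ⟨G, hGm, hGF, hG⟩ := exists_measurable_le_lintegral_eq μ fun x => F x ^ 2
  have hm : Measurable fun p : α × ℝ => {p : α × ℝ | ENNReal.ofReal p.2 ^ 2 < G p.1}.indicator
      (fun p => 2 * ENNReal.ofReal p.2) p :=
    (by fun_prop : Measurable fun p : α × ℝ => 2 * ENNReal.ofReal p.2).indicator
      (measurableSet_lt (by fun_prop) (hGm.comp measurable_fst))
  calc ∫⁻ x, F x ^ 2 ∂μ = ∫⁻ x, G x ∂μ := hG
    _ ≤ ∫⁻ x, (∫⁻ t in Ioi (0 : ℝ), {t : ℝ | ENNReal.ofReal t ^ 2 < G x}.indicator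
          (fun t => 2 * ENNReal.ofReal t) t) ∂μ :=
        lintegral_mono fun x => le_lintegral_Ioi_indicator_sq_lt (G x)
    _ = ∫⁻ t in Ioi (0 : ℝ), ∫⁻ x, {x | ENNReal.ofReal t ^ 2 < G x}.indicator
          (fun _ => 2 * ENNReal.ofReal t) x ∂μ :=
        lintegral_lintegral_swap hm.aemeasurable
    _ = ∫⁻ t in Ioi (0 : ℝ), 2 * ENNReal.ofReal t * μ {x | ENNReal.ofReal t ^ 2 < G x} :=
        lintegral_congr fun t => lintegral_indicator_const (measurableSet_lt measurable_const hGm) _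
    _ ≤ _ := lintegral_mono fun t => mul_le_mul_right (measure_mono fun x hx =>
        (ENNReal.pow_lt_pow_left_iff two_ne_zero).1 (lt_of_lt_of_le hx (hGF x))) _

theorem lintegral_Ioi_lintegral_indicator_lt_mul {g : α → ℝ≥0∞} (hg : Measurable g)
    (b : ℝ≥0∞) :
    ∫⁻ t in Ioi (0 : ℝ), ∫⁻ z, {z | ENNReal.ofReal t < b * g z}.indicator g z ∂μ
      = b * ∫⁻ z, g z ^ 2 ∂μ := by
  have hm : Measurable fun p : ℝ × α =>
      {p : ℝ × α | ENNReal.ofReal p.1 < b * g p.2}.indicator (fun p => g p.2) p :=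
    (hg.comp measurable_snd).indicator
      (measurableSet_lt (by fun_prop) ((hg.comp measurable_snd).const_mul b))
  calc ∫⁻ t in Ioi (0 : ℝ), ∫⁻ z, {z | ENNReal.ofReal t < b * g z}.indicator g z ∂μ
      = ∫⁻ z, (∫⁻ t in Ioi (0 : ℝ), {t : ℝ | ENNReal.ofReal t < b * g z}.indicator
          (fun _ => g z) t) ∂μ :=
        lintegral_lintegral_swap hm.aemeasurable
    _ = ∫⁻ z, b * g z ^ 2 ∂μ := lintegral_congr fun z => by
        rw [lintegral_indicator_const (measurableSet_lt ENNReal.measurable_ofReal measurable_const),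
          Measure.restrict_apply (measurableSet_lt ENNReal.measurable_ofReal measurable_const),
          volume_setOf_ofReal_lt_inter_Ioi]
        ring
    _ = b * ∫⁻ z, g z ^ 2 ∂μ := lintegral_const_mul b (hg.pow_const 2)

end LayerCake

section Meps

variable {n : ℕ}

theorem Meps_le_add_maximalFunction (ε : ℝ) (f : EuclideanSpace ℝ (Fin n) → ℝ) (s : ℝ≥0∞)
    (x : EuclideanSpace ℝ (Fin n)) :
    Meps ε f x ≤ ENNReal.ofReal ε * s
      + volume (closedBall (0 : EuclideanSpace ℝ (Fin n)) (33 / 16)) * maximalFunction volume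
          ({z | s < ENNReal.ofReal |f z|}.indicator fun z => ENNReal.ofReal |f z|) x := by
  set g := fun z => ENNReal.ofReal |f z|
  set gs := {z | s < g z}.indicator g
  refine iSup_le fun E => iSup_le fun _ => iSup_le fun hEB => iSup_le fun hEε =>
    iSup_le fun a => ?_
  obtain ⟨a, ha⟩ := a
  set A := {y : EuclideanSpace ℝ (Fin n) | a⁻¹ • y ∈ E}
  have hg : ∀ z, g z ≤ s + gs z := fun z => by
    by_cases h : s < g z
    · simp [gs, h]
    · exact le_add_right (not_lt.1 h)
  have hA : volume A = ENNReal.ofReal (a ^ n) * volume E := by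
    rw [show A = (a⁻¹ • ·) ⁻¹' E from rfl, Measure.addHaar_preimage_smul _ (inv_ne_zero ha.ne'),
      finrank_euclideanSpace_fin, inv_pow, inv_inv, abs_of_pos (by positivity)]
  have hAB : A ⊆ closedBall 0 (a * (33 / 16)) := fun y hy => by
    have := hEB hy
    rw [mem_closedBall_zero_iff, norm_smul, norm_inv, Real.norm_of_nonneg ha.le,
      inv_mul_le_iff₀ ha] at this
    rwa [mem_closedBall_zero_iff]
  have hB : volume (closedBall x (a * (33 / 16))) = ENNReal.ofReal (a ^ n)
      * volume (closedBall (0 : EuclideanSpace ℝ (Fin n)) (33 / 16)) := by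
    rw [Measure.addHaar_closedBall_mul _ _ ha.le (by norm_num), finrank_euclideanSpace_fin]
  have han : ENNReal.ofReal (a ^ n) ≠ 0 := by simp [pow_pos ha]
  calc ENNReal.ofReal ((a ^ n)⁻¹) * ∫⁻ y in A, g (x - y)
      ≤ (ENNReal.ofReal (a ^ n))⁻¹ * (s * volume A + ∫⁻ y in A, gs (x - y)) := by
        rw [ENNReal.ofReal_inv_of_pos (by positivity), ← setLIntegral_const,
          ← lintegral_add_left measurable_const]
        gcongr with y
        exact hg _
    _ ≤ (ENNReal.ofReal (a ^ n))⁻¹ * (s * (ENNReal.ofReal (a ^ n) * ENNReal.ofReal ε)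
          + ENNReal.ofReal (a ^ n) * (volume (closedBall (0 : EuclideanSpace ℝ (Fin n)) (33 / 16))
            * maximalFunction volume gs x)) := by
        gcongr
        · exact hA ▸ mul_le_mul_right hEε _
        · rw [← mul_assoc, ← hB]
          exact setLIntegral_sub_le_measure_mul_maximalFunction _ (by positivity) hAB gs x
    _ = ((ENNReal.ofReal (a ^ n))⁻¹ * ENNReal.ofReal (a ^ n)) * (ENNReal.ofReal ε * s
          + volume (closedBall (0 : EuclideanSpace ℝ (Fin n)) (33 / 16))
            * maximalFunction volume gs x) := by ring
    _ = _ := by rw [ENNReal.inv_mul_cancel han ENNReal.ofReal_ne_top, one_mul]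

theorem volume_lt_Meps_le {ε : ℝ} (hε : 0 < ε) (f : EuclideanSpace ℝ (Fin n) → ℝ) {t : ℝ≥0∞}
    (ht : t ≠ 0) :
    volume {x | t < Meps ε f x}
      ≤ 2 * 4 ^ n * volume (closedBall (0 : EuclideanSpace ℝ (Fin n)) (33 / 16)) * t⁻¹
        * ∫⁻ z, {z | t < 2 * ENNReal.ofReal ε * ENNReal.ofReal |f z|}.indicator
            (fun z => ENNReal.ofReal |f z|) z := by
  set c := volume (closedBall (0 : EuclideanSpace ℝ (Fin n)) (33 / 16))
  set g := fun z => ENNReal.ofReal |f z|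
  -- truncation height making the bounded part of `Meps` at most `t / 2`
  set s := t / 2 / ENNReal.ofReal ε
  have hc0 : c ≠ 0 := (measure_closedBall_pos volume 0 (by norm_num)).ne'
  have hctop : c ≠ ∞ := measure_closedBall_lt_top.ne
  have hε0 : ENNReal.ofReal ε ≠ 0 := by simp [hε]
  have hset : {z | s < g z} = {z | t < 2 * ENNReal.ofReal ε * g z} := by
    ext z
    simp only [mem_ofPred_eq, s]
    rw [ENNReal.div_lt_iff (.inl hε0) (.inl ofReal_ne_top),
      ENNReal.div_lt_iff (.inl two_ne_zero) (.inl ofNat_ne_top)]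
    ring_nf
  have hsub : {x | t < Meps ε f x}
      ⊆ {x | t / 2 / c < maximalFunction volume ({z | s < g z}.indicator g) x} := by
    intro x hx
    have hx' := lt_of_lt_of_le hx (Meps_le_add_maximalFunction ε f s x)
    rw [ENNReal.mul_div_cancel hε0 ofReal_ne_top] at hx'
    have htop : t / 2 ≠ ∞ := (ENNReal.div_lt_top (ne_top_of_lt hx) two_ne_zero).ne
    have hhalf :
        t / 2 + t / 2 < t / 2 + c * maximalFunction volume ({z | s < g z}.indicator g) x := by
      rwa [ENNReal.add_halves]
    rw [mem_ofPred_eq, ENNReal.div_lt_iff (.inl hc0) (.inl hctop), mul_comm]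
    exact (ENNReal.add_lt_add_iff_left htop).1 hhalf
  have hpos : t / 2 / c ≠ 0 := (ENNReal.div_pos (ENNReal.div_pos ht ofNat_ne_top).ne' hctop).ne'
  calc volume {x | t < Meps ε f x}
      ≤ volume {x | t / 2 / c < maximalFunction volume ({z | s < g z}.indicator g) x} :=
        measure_mono hsub
    _ ≤ 4 ^ n * (t / 2 / c)⁻¹ * ∫⁻ z, {z | s < g z}.indicator g z := by
        simpa only [finrank_euclideanSpace_fin] using
          measure_lt_maximalFunction_le volume ({z | s < g z}.indicator g) hpos
    _ = 2 * 4 ^ n * c * t⁻¹ * ∫⁻ z, {z | t < 2 * ENNReal.ofReal ε * g z}.indicator g z := by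
        rw [hset, ENNReal.inv_div (.inl hctop) (.inl hc0), div_eq_mul_inv c,
          ENNReal.inv_div (.inl ofNat_ne_top) (.inl two_ne_zero), div_eq_mul_inv]
        ring

theorem lintegral_Meps_sq_le {ε : ℝ} (hε : 0 < ε) {f : EuclideanSpace ℝ (Fin n) → ℝ}
    (hf : Measurable f) :
    ∫⁻ x, Meps ε f x ^ 2
      ≤ 8 * 4 ^ n * volume (closedBall (0 : EuclideanSpace ℝ (Fin n)) (33 / 16))
        * ENNReal.ofReal ε * ∫⁻ x, ENNReal.ofReal |f x| ^ 2 := by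
  set c := volume (closedBall (0 : EuclideanSpace ℝ (Fin n)) (33 / 16))
  set g := fun z => ENNReal.ofReal |f z|
  have hctop : c ≠ ∞ := measure_closedBall_lt_top.ne
  calc ∫⁻ x, Meps ε f x ^ 2
      ≤ ∫⁻ t in Ioi (0 : ℝ), 2 * ENNReal.ofReal t * volume {x | ENNReal.ofReal t < Meps ε f x} :=
        lintegral_sq_le_lintegral_measure_lt volume _
    _ ≤ ∫⁻ t in Ioi (0 : ℝ), 2 * (2 * 4 ^ n * c)
          * ∫⁻ z, {z | ENNReal.ofReal t < 2 * ENNReal.ofReal ε * g z}.indicator g z :=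
        setLIntegral_mono' measurableSet_Ioi fun t ht => by
          have ht0 : ENNReal.ofReal t ≠ 0 := by simpa using ht
          calc 2 * ENNReal.ofReal t * volume {x | ENNReal.ofReal t < Meps ε f x}
              ≤ 2 * ENNReal.ofReal t * (2 * 4 ^ n * c * (ENNReal.ofReal t)⁻¹
                * ∫⁻ z, {z | ENNReal.ofReal t < 2 * ENNReal.ofReal ε * g z}.indicator g z) := by
                gcongr
                exact volume_lt_Meps_le hε f ht0
            _ = 2 * (2 * 4 ^ n * c) * (ENNReal.ofReal t * (ENNReal.ofReal t)⁻¹)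
                * ∫⁻ z, {z | ENNReal.ofReal t < 2 * ENNReal.ofReal ε * g z}.indicator g z := by
                ring
            _ = _ := by rw [ENNReal.mul_inv_cancel ht0 ofReal_ne_top, mul_one]
    _ = 2 * (2 * 4 ^ n * c) * (2 * ENNReal.ofReal ε * ∫⁻ z, g z ^ 2) := by
        rw [lintegral_const_mul' _ _ (by finiteness),
          lintegral_Ioi_lintegral_indicator_lt_mul volume hf.abs.ennreal_ofReal]
    _ = 8 * 4 ^ n * c * ENNReal.ofReal ε * ∫⁻ x, g x ^ 2 := by ring

end Meps

/-- `‖M_ε f‖_{L²} ≤ C ε^{1/2} ‖f‖_{L²}` with `C = C(n)`. -/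
theorem stmt6 (n : ℕ) :
    ∃ C : ℝ, 0 < C ∧ ∀ (ε : ℝ), 0 < ε →
      ∀ f : EuclideanSpace ℝ (Fin n) → ℝ, Measurable f →
        (∫⁻ x, (Meps ε f x) ^ (2:ℝ)) ^ (1/2 : ℝ)
          ≤ ENNReal.ofReal (C * ε ^ (1/2 : ℝ)) *
            (∫⁻ x, ENNReal.ofReal |f x| ^ (2:ℝ)) ^ (1/2 : ℝ) := by
  set K : ℝ≥0∞ := 8 * 4 ^ n * volume (closedBall (0 : EuclideanSpace ℝ (Fin n)) (33 / 16))
  have hc0 := (measure_closedBall_pos volume (0 : EuclideanSpace ℝ (Fin n))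
    (show (0 : ℝ) < 33 / 16 by norm_num)).ne'
  have hKtop : K ≠ ∞ :=
    ENNReal.mul_ne_top (by finiteness) measure_closedBall_lt_top.ne
  have hK : 0 < K.toReal := ENNReal.toReal_pos (by simp [K, hc0]) hKtop
  refine ⟨K.toReal ^ (1/2 : ℝ), by positivity, fun ε hε f hf => ?_⟩
  have h : ∫⁻ x, Meps ε f x ^ 2
      ≤ ENNReal.ofReal (K.toReal * ε) * ∫⁻ x, ENNReal.ofReal |f x| ^ 2 := by
    rw [ENNReal.ofReal_mul hK.le, ENNReal.ofReal_toReal hKtop]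
    exact lintegral_Meps_sq_le hε hf
  simp only [ENNReal.rpow_two]
  calc (∫⁻ x, Meps ε f x ^ 2) ^ (1/2 : ℝ)
      ≤ (ENNReal.ofReal (K.toReal * ε) * ∫⁻ x, ENNReal.ofReal |f x| ^ 2) ^ (1/2 : ℝ) := by
        gcongr
    _ = _ := by
        rw [ENNReal.mul_rpow_of_nonneg _ _ (by norm_num),
          ENNReal.ofReal_rpow_of_nonneg (by positivity) (by norm_num), Real.mul_rpow hK.le hε.le]
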